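/- Let X and Y be real normed spaces with dim X ≥ dim Y = 2, Y strictly convex, and ρ > 0. Suppose f : X → Y preserves the distance ρ and satisfies: for all u, v ∈ X, if ||u−v||/ρ is a positive rational then ||f(u)−f(v)|| ≠ ||u−v||/2. Then f is an isometry. -/

import Mathlib

set_option maxHeartbeats 1000000

section BQAux
variable {Y : Type*} [NormedAddCommGroup Y] [NormedSpace ℝ Y]



/-- strict convexity: strict combination of two distinct points of norm `r` has norm `< r` -/
lemma sc_combo'
    (hsc : ∀ a b : Y, a ≠ 0 → b ≠ 0 → ‖a + b‖ = ‖a‖ + ‖b‖ → ∃ γ : ℝ, 0 < γ ∧ a = γ • b)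
    {r : ℝ} (hr : 0 < r) {A B : Y} (hA : ‖A‖ = r) (hB : ‖B‖ = r) (hAB : A ≠ B)
    {l : ℝ} (h0 : 0 < l) (h1 : l < 1) : ‖l • A + (1 - l) • B‖ < r := by
  have hA0 : A ≠ 0 := by rintro rfl; simp at hA; nlinarith
  have hB0 : B ≠ 0 := by rintro rfl; simp at hB; nlinarith
  have hle : ‖l • A + (1 - l) • B‖ ≤ r := by
    calc ‖l • A + (1 - l) • B‖ ≤ ‖l • A‖ + ‖(1 - l) • B‖ := norm_add_le _ _
    _ = l * r + (1 - l) * r := by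
        rw [norm_smul, norm_smul, hA, hB, Real.norm_eq_abs, Real.norm_eq_abs,
          abs_of_pos h0, abs_of_pos (by linarith)]
    _ = r := by ring
  rcases lt_or_eq_of_le hle with h | h
  · exact h
  exfalso
  have hna : ‖l • A‖ = l * r := by
    rw [norm_smul, hA, Real.norm_eq_abs, abs_of_pos h0]
  have hnb : ‖(1 - l) • B‖ = (1 - l) * r := by
    rw [norm_smul, hB, Real.norm_eq_abs, abs_of_pos (by linarith)]
  obtain ⟨γ, hγ, hab⟩ := hsc (l • A) ((1 - l) • B)
    (smul_ne_zero (ne_of_gt h0) hA0) (smul_ne_zero (ne_of_gt (by linarith)) hB0)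
    (by rw [h, hna, hnb]; ring)
  rw [smul_smul] at hab
  have hA' : A = (l⁻¹ * (γ * (1 - l))) • B := by
    have h' := congrArg (fun v => l⁻¹ • v) hab
    simp only [smul_smul, inv_mul_cancel₀ (ne_of_gt h0), one_smul] at h'
    exact h'
  set c := l⁻¹ * (γ * (1 - l)) with hc
  have hcpos : 0 < c := by
    apply mul_pos (inv_pos.mpr h0) (mul_pos hγ (by linarith))
  have h1' : r = |c| * r := by
    conv_lhs => rw [← hA]
    rw [hA', norm_smul, hB, Real.norm_eq_abs]
  have : c = 1 := by
    rw [abs_of_pos hcpos] at h1'; nlinarith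
  apply hAB
  rw [hA', this, one_smul]

/-- a coordinate functional vanishing exactly on `ℝ ∙ d` -/
lemma exists_coord' (hY : Module.finrank ℝ Y = 2) {d : Y} (hd : d ≠ 0) :
    ∃ φ : Y →ₗ[ℝ] ℝ, φ d = 0 ∧ ∀ v : Y, φ v = 0 → ∃ c : ℝ, v = c • d := by
  have : ∃ b : Y, ∀ c : ℝ, b ≠ c • d := by
    by_contra h
    push_neg at h
    have hsp : (⊤ : Submodule ℝ Y) = Submodule.span ℝ {d} := by
      apply le_antisymm
      · intro v _
        obtain ⟨c, hc⟩ := h v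
        rw [hc]
        exact Submodule.smul_mem _ _ (Submodule.mem_span_singleton_self d)
      · exact le_top
    have h1 : Module.finrank ℝ (Submodule.span ℝ ({d} : Set Y)) = 1 :=
      finrank_span_singleton hd
    have h2 : Module.finrank ℝ (⊤ : Submodule ℝ Y) = 2 := by
      rw [finrank_top]; exact hY
    rw [hsp] at h2
    omega
  obtain ⟨b, hb⟩ := this
  have hli : LinearIndependent ℝ ![b, d] := by
    rw [LinearIndependent.pair_iff]
    intro s t hst
    by_contra hcon
    rcases eq_or_ne s 0 with hs | hs
    · subst hs
      simp only [zero_smul, zero_add] at hst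
      rcases eq_or_ne t 0 with ht | ht
      · exact hcon ⟨rfl, ht⟩
      · exact hd (by simpa [smul_eq_zero, ht] using hst)
    · apply hb (s⁻¹ * -t)
      have h1 : s • b = (-t) • d := by
        rw [neg_smul]
        exact eq_neg_of_add_eq_zero_left hst
      have h' := congrArg (fun v => s⁻¹ • v) h1
      simp only [smul_smul, inv_mul_cancel₀ hs, one_smul] at h'
      exact h'
  let B := basisOfLinearIndependentOfCardEqFinrank hli (by simp [hY])
  have hB : ∀ i, B i = ![b, d] i := fun i => by
    simp [B, coe_basisOfLinearIndependentOfCardEqFinrank]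
  refine ⟨B.coord 0, ?_, ?_⟩
  · have : B.coord 0 (B 1) = 0 := by simp
    rw [hB 1] at this
    simpa using this
  · intro v hv
    refine ⟨B.repr v 1, ?_⟩
    have hs := B.sum_repr v
    rw [Fin.sum_univ_two, hB 0, hB 1] at hs
    have h0 : B.repr v 0 = 0 := hv
    rw [h0, zero_smul, zero_add] at hs
    simpa using hs.symm

/-- no three points on a line have norm r -/
lemma line_sphere
    (hsc : ∀ a b : Y, a ≠ 0 → b ≠ 0 → ‖a + b‖ = ‖a‖ + ‖b‖ → ∃ γ : ℝ, 0 < γ ∧ a = γ • b)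
    {r : ℝ} (hr : 0 < r) {v d : Y} (hd : d ≠ 0) {s₁ s₂ s₃ : ℝ} (h12 : s₁ < s₂) (h23 : s₂ < s₃)
    (n1 : ‖v + s₁ • d‖ = r) (n2 : ‖v + s₂ • d‖ = r) (n3 : ‖v + s₃ • d‖ = r) : False := by
  have hΔ : s₃ - s₁ ≠ 0 := ne_of_gt (by linarith)
  set l := (s₃ - s₂) / (s₃ - s₁) with hl
  have hl0 : 0 < l := div_pos (by linarith) (by linarith)
  have hl1 : l < 1 := (div_lt_one (by linarith)).mpr (by linarith)
  have hne : v + s₁ • d ≠ v + s₃ • d := by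
    intro h
    have h' : s₁ • d = s₃ • d := add_left_cancel h
    have h'' : (s₃ - s₁) • d = 0 := by rw [sub_smul, ← h', sub_self]
    rcases smul_eq_zero.mp h'' with h3 | h3
    · exact hΔ h3
    · exact hd h3
  have hls : l * s₁ + (1 - l) * s₃ = s₂ := by
    rw [hl]; field_simp; ring
  have key : l • (v + s₁ • d) + (1 - l) • (v + s₃ • d) = v + s₂ • d := by
    rw [← hls]; module
  have := sc_combo' hsc hr n1 n3 hne hl0 hl1
  rw [key, n2] at this
  exact lt_irrefl r this

/-- two distinct circles of the same radius meet in at most two points -/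
lemma two_circles' (hY : Module.finrank ℝ Y = 2)
    (hsc : ∀ a b : Y, a ≠ 0 → b ≠ 0 → ‖a + b‖ = ‖a‖ + ‖b‖ → ∃ γ : ℝ, 0 < γ ∧ a = γ • b)
    {r : ℝ} (hr : 0 < r) {d : Y} (hd : d ≠ 0) {y₁ y₂ y₃ : Y}
    (a1 : ‖y₁‖ = r) (b1 : ‖y₁ - d‖ = r) (a2 : ‖y₂‖ = r) (b2 : ‖y₂ - d‖ = r)
    (a3 : ‖y₃‖ = r) (b3 : ‖y₃ - d‖ = r) (h12 : y₁ ≠ y₂) : y₃ = y₁ ∨ y₃ = y₂ := by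
  by_contra hcon
  push_neg at hcon
  obtain ⟨h31, h32⟩ := hcon
  obtain ⟨φ, hφd, hker⟩ := exists_coord' hY hd
  -- same height implies equal
  have hgt : ∀ u v : Y, ‖u‖ = r → ‖u - d‖ = r → ‖v‖ = r → ‖v - d‖ = r → φ u = φ v → u = v := by
    intro u v hu hud hv hvd heq
    have : φ (u - v) = 0 := by rw [map_sub, heq, sub_self]
    obtain ⟨t, ht⟩ := hker _ this
    have hu' : u = v + t • d := by rw [← ht]; abel
    rcases lt_trichotomy t 0 with htn | htz | htp
    · exfalso
      have F0 : ‖v + (0:ℝ) • d‖ = r := by simpa using hv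
      have Ft : ‖v + t • d‖ = r := by rw [← hu']; exact hu
      have Ftm1 : ‖v + (t-1) • d‖ = r := by
        have he : v + (t-1) • d = (v + t • d) - d := by module
        rw [he, ← hu']; exact hud
      exact line_sphere hsc hr hd (by linarith : t - 1 < t) htn Ftm1 Ft F0
    · rw [htz] at hu'; simpa using hu'
    · exfalso
      have F0 : ‖v + (0:ℝ) • d‖ = r := by simpa using hv
      have Ft : ‖v + t • d‖ = r := by rw [← hu']; exact hu
      have Fm1 : ‖v + (-1:ℝ) • d‖ = r := by
        have he : v + (-1:ℝ) • d = v - d := by module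
        rw [he]; exact hvd
      exact line_sphere hsc hr hd (by norm_num : (-1:ℝ) < 0) htp Fm1 F0 Ft
  -- heights pairwise distinct
  have d12 : φ y₁ ≠ φ y₂ := fun h => h12 (hgt _ _ a1 b1 a2 b2 h)
  have d31 : φ y₃ ≠ φ y₁ := fun h => h31 (hgt _ _ a3 b3 a1 b1 h)
  have d32 : φ y₃ ≠ φ y₂ := fun h => h32 (hgt _ _ a3 b3 a2 b2 h)
  -- key: middle height gives contradiction
  have key : ∀ A B C : Y, ‖A‖ = r → ‖A - d‖ = r → ‖B‖ = r → ‖B - d‖ = r →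
      ‖C‖ = r → ‖C - d‖ = r → φ A < φ B → φ B < φ C → False := by
    intro A B C nA nAd nB nBd nC nCd hAB hBC
    have hden : φ C - φ A ≠ 0 := ne_of_gt (by linarith)
    set l := (φ C - φ B) / (φ C - φ A) with hl
    have hl0 : 0 < l := div_pos (by linarith) (by linarith)
    have hl1 : l < 1 := (div_lt_one (by linarith)).mpr (by linarith)
    have hAC : A ≠ C := fun h => by rw [h] at hAB; linarith
    set z := l • A + (1 - l) • C with hz
    have hzr : ‖z‖ < r := sc_combo' hsc hr nA nC hAC hl0 hl1
    have hACd : A - d ≠ C - d := fun h => hAC (by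
      have := congrArg (fun w => w + d) h
      simpa using this)
    have hzd : ‖z - d‖ < r := by
      have he : z - d = l • (A - d) + (1 - l) • (C - d) := by rw [hz]; module
      rw [he]
      exact sc_combo' hsc hr nAd nCd hACd hl0 hl1
    have hφz : φ z = φ B := by
      rw [hz]
      simp only [map_add, map_smul, smul_eq_mul]
      rw [hl]; field_simp; ring
    have hB0 : φ (B - z) = 0 := by rw [map_sub, hφz, sub_self]
    obtain ⟨τ, hτ⟩ := hker _ hB0
    have hB' : B = z + τ • d := by rw [← hτ]; abel
    have hτ0 : τ ≠ 0 := by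
      intro h
      rw [h, zero_smul, add_zero] at hB'
      rw [← hB', nB] at hzr
      exact lt_irrefl r hzr
    have hBd' : B - d = z + (τ - 1) • d := by rw [hB']; module
    have hnτ : ‖z + τ • d‖ = r := by rw [← hB']; exact nB
    have hnτ1 : ‖z + (τ - 1) • d‖ = r := by rw [← hBd']; exact nBd
    rcases lt_or_gt_of_ne hτ0 with hneg | hpos
    · -- τ < 0
      set μ := τ / (τ - 1) with hμ
      have hμ0 : 0 < μ := div_pos_of_neg_of_neg hneg (by linarith)
      have h1 : μ * (τ - 1) = τ := by
        rw [hμ, div_mul_cancel₀ _ (ne_of_lt (by linarith : τ - 1 < 0))]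
      have hμ1 : μ < 1 := by
        by_contra hc
        push_neg at hc
        have h2 : μ * (τ - 1) ≤ 1 * (τ - 1) :=
          mul_le_mul_of_nonpos_right hc (by linarith)
        rw [h1, one_mul] at h2; linarith
      have comb : μ • (z + (τ - 1) • d) + (1 - μ) • z = z + τ • d := by
        have he : μ • (z + (τ - 1) • d) + (1 - μ) • z = z + (μ * (τ - 1)) • d := by
          module
        rw [he, h1]
      have hle : ‖z + τ • d‖ ≤ μ * r + (1 - μ) * ‖z‖ := by
        rw [← comb]
        calc ‖μ • (z + (τ - 1) • d) + (1 - μ) • z‖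
            ≤ ‖μ • (z + (τ - 1) • d)‖ + ‖(1 - μ) • z‖ := norm_add_le _ _
          _ = μ * ‖z + (τ - 1) • d‖ + (1 - μ) * ‖z‖ := by
              rw [norm_smul, norm_smul, Real.norm_eq_abs, Real.norm_eq_abs,
                abs_of_pos hμ0, abs_of_pos (by linarith)]
          _ = μ * r + (1 - μ) * ‖z‖ := by rw [hnτ1]
      nlinarith
    · -- τ > 0
      set μ := 1 / (τ + 1) with hμ
      have hμ0 : 0 < μ := by rw [hμ]; positivity
      have h1 : μ * (τ + 1) = 1 := by
        rw [hμ, div_mul_cancel₀ _ (ne_of_gt (by linarith : (0:ℝ) < τ + 1))]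
      have hμ1 : μ < 1 := by nlinarith [h1]
      have hc : -μ + (1 - μ) * τ = τ - 1 := by nlinarith [h1]
      have comb : μ • (z - d) + (1 - μ) • (z + τ • d) = z + (τ - 1) • d := by
        rw [← hc]; module
      have hle : ‖z + (τ - 1) • d‖ ≤ μ * ‖z - d‖ + (1 - μ) * r := by
        rw [← comb]
        calc ‖μ • (z - d) + (1 - μ) • (z + τ • d)‖
            ≤ ‖μ • (z - d)‖ + ‖(1 - μ) • (z + τ • d)‖ := norm_add_le _ _
          _ = μ * ‖z - d‖ + (1 - μ) * ‖z + τ • d‖ := by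
              rw [norm_smul, norm_smul, Real.norm_eq_abs, Real.norm_eq_abs,
                abs_of_pos hμ0, abs_of_pos (by linarith)]
          _ = μ * ‖z - d‖ + (1 - μ) * r := by rw [hnτ]
      nlinarith
  rcases lt_trichotomy (φ y₁) (φ y₂) with h12' | h12' | h12'
  · rcases lt_trichotomy (φ y₃) (φ y₁) with h | h | h
    · exact key y₃ y₁ y₂ a3 b3 a1 b1 a2 b2 h h12'
    · exact d31 h
    · rcases lt_trichotomy (φ y₃) (φ y₂) with h' | h' | h'
      · exact key y₁ y₃ y₂ a1 b1 a3 b3 a2 b2 h h'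
      · exact d32 h'
      · exact key y₁ y₂ y₃ a1 b1 a2 b2 a3 b3 h12' h'
  · exact d12 h12'
  · rcases lt_trichotomy (φ y₃) (φ y₂) with h | h | h
    · exact key y₃ y₂ y₁ a3 b3 a2 b2 a1 b1 h h12'
    · exact d32 h
    · rcases lt_trichotomy (φ y₃) (φ y₁) with h' | h' | h'
      · exact key y₂ y₃ y₁ a2 b2 a3 b3 a1 b1 h h'
      · exact d31 h'
      · exact key y₂ y₁ y₃ a2 b2 a1 b1 a3 b3 h12' h'

/-- two circles of radius `r` around distinct centers: membership version -/
lemma circ_mem (hY : Module.finrank ℝ Y = 2)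
    (hsc : ∀ a b : Y, a ≠ 0 → b ≠ 0 → ‖a + b‖ = ‖a‖ + ‖b‖ → ∃ γ : ℝ, 0 < γ ∧ a = γ • b)
    {r : ℝ} (hr : 0 < r) {c₁ c₂ x₁ x₂ x₃ : Y} (hc : c₁ ≠ c₂)
    (h11 : ‖x₁ - c₁‖ = r) (h12 : ‖x₁ - c₂‖ = r)
    (h21 : ‖x₂ - c₁‖ = r) (h22 : ‖x₂ - c₂‖ = r)
    (h31 : ‖x₃ - c₁‖ = r) (h32 : ‖x₃ - c₂‖ = r)
    (hx : x₁ ≠ x₂) : x₃ = x₁ ∨ x₃ = x₂ := by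
  have hd : c₂ - c₁ ≠ 0 := sub_ne_zero.mpr (Ne.symm hc)
  have e1 : ∀ x : Y, x - c₁ - (c₂ - c₁) = x - c₂ := fun x => by abel
  have r1 : ‖x₁ - c₁ - (c₂ - c₁)‖ = r := by rw [e1]; exact h12
  have r2 : ‖x₂ - c₁ - (c₂ - c₁)‖ = r := by rw [e1]; exact h22
  have r3 : ‖x₃ - c₁ - (c₂ - c₁)‖ = r := by rw [e1]; exact h32
  have hne : x₁ - c₁ ≠ x₂ - c₁ := fun h => hx (by
    have := congrArg (fun w => w + c₁) h; simpa using this)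
  rcases two_circles' hY hsc hr hd h11 r1 h21 r2 h31 r3 hne with h | h
  · left
    have := congrArg (fun w => w + c₁) h; simpa using this
  · right
    have := congrArg (fun w => w + c₁) h; simpa using this

lemma fold_ne {r : ℝ} (hr : 0 < r) {A B X : Y} (hAB : ‖A - B‖ = r) (hXA : ‖X - A‖ = r) :
    X ≠ A + B - X := by
  intro h
  have h0 : X - (A + B - X) = 0 := sub_eq_zero.mpr h
  have key : A - B - (2:ℝ) • (A - X) = X - (A + B - X) := by module
  rw [h0] at key
  have h2 : A - B = (2:ℝ) • (A - X) := by
    have := sub_eq_zero.mp key; exact this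
  have hnorm : ‖A - B‖ = ‖(2:ℝ) • (A - X)‖ := by rw [h2]
  rw [hAB, norm_smul, Real.norm_eq_abs, abs_of_pos (by norm_num : (0:ℝ) < 2),
    norm_sub_rev, hXA] at hnorm
  linarith

/-- local rigidity: the five-point strip configuration -/
lemma local_step' (hY : Module.finrank ℝ Y = 2)
    (hsc : ∀ a b : Y, a ≠ 0 → b ≠ 0 → ‖a + b‖ = ‖a‖ + ‖b‖ → ∃ γ : ℝ, 0 < γ ∧ a = γ • b)
    {r : ℝ} (hr : 0 < r) {P0 P1 P2 Q0 Q1 : Y}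
    (h01 : ‖P0 - P1‖ = r) (h12 : ‖P1 - P2‖ = r)
    (h0Q0 : ‖P0 - Q0‖ = r) (h1Q0 : ‖P1 - Q0‖ = r)
    (h1Q1 : ‖P1 - Q1‖ = r) (hQ01 : ‖Q0 - Q1‖ = r) (h2Q1 : ‖P2 - Q1‖ = r) :
    P2 = (2:ℝ) • P1 - P0 ∨ ‖P0 - P2‖ = r := by
  have hc1 : P1 ≠ Q0 := fun h => by rw [h, sub_self, norm_zero] at h1Q0; linarith
  -- first circle pair: centers P1, Q0; points P0, P0' := P1 + Q0 - P0, Q1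
  set P0' := P1 + Q0 - P0 with hP0'
  have hP0'1 : ‖P0' - P1‖ = r := by
    have he : P0' - P1 = -(P0 - Q0) := by rw [hP0']; module
    rw [he, norm_neg]; exact h0Q0
  have hP0'2 : ‖P0' - Q0‖ = r := by
    have he : P0' - Q0 = -(P0 - P1) := by rw [hP0']; module
    rw [he, norm_neg]; exact h01
  have hfold1 : P0 ≠ P0' := fold_ne hr h1Q0 h01
  have hQ1mem := circ_mem hY hsc hr hc1
    h01 h0Q0 hP0'1 hP0'2
    (by rw [norm_sub_rev]; exact h1Q1) (by rw [norm_sub_rev]; exact hQ01) hfold1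
  rcases hQ1mem with hQ1 | hQ1
  · -- Q1 = P0 : folding case, conclude ‖P0 - P2‖ = r
    right
    have hc2 : P1 ≠ Q1 := fun h => by rw [h, sub_self, norm_zero] at h1Q1; linarith
    set Q0'' := P0 + P1 - Q0 with hQ0''
    have m1 : ‖Q0 - P1‖ = r := by rw [norm_sub_rev]; exact h1Q0
    have m2 : ‖Q0 - Q1‖ = r := hQ01
    have m3 : ‖Q0'' - P1‖ = r := by
      have he : Q0'' - P1 = P0 - Q0 := by rw [hQ0'']; module
      rw [he]; exact h0Q0
    have m4 : ‖Q0'' - Q1‖ = r := by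
      rw [hQ1]
      have he : Q0'' - P0 = P1 - Q0 := by rw [hQ0'']; module
      rw [he]; exact h1Q0
    have m5 : ‖P2 - P1‖ = r := by rw [norm_sub_rev]; exact h12
    have hfold2 : Q0 ≠ Q0'' := fold_ne hr h01 (by rw [norm_sub_rev]; exact h0Q0)
    rcases circ_mem hY hsc hr hc2 m1 m2 m3 m4 m5 h2Q1 hfold2 with h | h
    · rw [h]; exact h0Q0
    · rw [h]
      have he : P0 - Q0'' = Q0 - P1 := by rw [hQ0'']; module
      rw [he, norm_sub_rev]; exact h1Q0
  · -- Q1 = P0' : good case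
    have hc2 : P1 ≠ Q1 := fun h => by rw [h, sub_self, norm_zero] at h1Q1; linarith
    set W := P1 + Q1 - Q0 with hW
    have m1 : ‖Q0 - P1‖ = r := by rw [norm_sub_rev]; exact h1Q0
    have m3 : ‖W - P1‖ = r := by
      have he : W - P1 = -(Q0 - Q1) := by rw [hW]; module
      rw [he, norm_neg]; exact hQ01
    have m4 : ‖W - Q1‖ = r := by
      have he : W - Q1 = P1 - Q0 := by rw [hW]; module
      rw [he]; exact h1Q0
    have m5 : ‖P2 - P1‖ = r := by rw [norm_sub_rev]; exact h12
    have hfold2 : Q0 ≠ W := fold_ne hr h1Q1 (by rw [norm_sub_rev]; exact h1Q0)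
    rcases circ_mem hY hsc hr hc2 m1 hQ01 m3 m4 m5 h2Q1 hfold2 with h | h
    · right; rw [h]; exact h0Q0
    · left
      rw [h, hW, hQ1, hP0']
      module


section Xside
variable {X : Type*} [NormedAddCommGroup X] [NormedSpace ℝ X]
/-- intersection of two spheres in a space of rank ≥ 2 -/
lemma exists_point'' (hX : 2 ≤ Module.rank ℝ X) (a b : X) {r s : ℝ}
    (hr : 0 ≤ r) (hs : 0 ≤ s) (h1 : |r - s| ≤ ‖a - b‖) (h2 : ‖a - b‖ ≤ r + s) :
    ∃ c : X, ‖c - a‖ = r ∧ ‖c - b‖ = s := by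
  have hnontriv : ∃ v : X, v ≠ 0 := by
    by_contra h
    push_neg at h
    have : Module.rank ℝ X = 0 := by
      rw [rank_eq_zero_iff]
      intro x
      exact ⟨1, one_ne_zero, by rw [h x, smul_zero]⟩
    rw [this] at hX
    norm_num at hX
  rcases eq_or_ne a b with rfl | hab
  · -- a = b : then r = s
    simp only [sub_self, norm_zero] at h1 h2
    have hrs : r = s := by
      rw [abs_nonpos_iff] at h1
      linarith [sub_eq_zero.mp h1]
    obtain ⟨v, hv⟩ := hnontriv
    have hv0 : ‖v‖ ≠ 0 := norm_ne_zero_iff.mpr hv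
    have hnorm : ‖a + (r * ‖v‖⁻¹) • v - a‖ = r := by
      have he : a + (r * ‖v‖⁻¹) • v - a = (r * ‖v‖⁻¹) • v := by abel
      rw [he, norm_smul, Real.norm_eq_abs, abs_of_nonneg (by positivity)]
      field_simp
    exact ⟨a + (r * ‖v‖⁻¹) • v, hnorm, by rw [hnorm, hrs]⟩
  · set e₁ := b - a with he₁
    have he₁0 : e₁ ≠ 0 := sub_ne_zero.mpr (Ne.symm hab)
    set dd := ‖e₁‖ with hdd
    have hd0 : 0 < dd := norm_pos_iff.mpr he₁0
    -- find e₂ not a multiple of e₁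
    have : ∃ e₂ : X, ∀ c : ℝ, e₂ ≠ c • e₁ := by
      by_contra h
      push_neg at h
      have hsp : (⊤ : Submodule ℝ X) = Submodule.span ℝ {e₁} := by
        apply le_antisymm
        · intro v _
          obtain ⟨c, hc⟩ := h v
          rw [hc]
          exact Submodule.smul_mem _ _ (Submodule.mem_span_singleton_self e₁)
        · exact le_top
      have hle : Module.rank ℝ X ≤ 1 := by
        conv_lhs => rw [← rank_top ℝ X]
        rw [hsp]
        refine le_trans (rank_span_le _) ?_
        simp
      have : (2:Cardinal) ≤ 1 := le_trans hX hle
      norm_num at this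
    obtain ⟨e₂, he₂⟩ := this
    set u : ℝ → X := fun t => (1 - 2*t) • e₁ + (t*(1-t)) • e₂ with hu
    have hu0 : ∀ t : ℝ, u t ≠ 0 := by
      intro t h
      rcases eq_or_ne (t*(1-t)) 0 with h0 | h0
      · have h1' : (1 - 2*t) ≠ 0 := by
          rcases mul_eq_zero.mp h0 with h' | h'
          · rw [h']; norm_num
          · have : t = 1 := by linarith
            rw [this]; norm_num
        apply he₁0
        rw [hu] at h
        simp only [h0, zero_smul, add_zero] at h
        rcases smul_eq_zero.mp h with h' | h'
        · exact absurd h' h1'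
        · exact h'
      · apply he₂ (-(1 - 2*t) / (t*(1-t)))
        rw [hu] at h
        have h' : (t*(1-t)) • e₂ = (-(1 - 2*t)) • e₁ := by
          rw [neg_smul]
          exact eq_neg_of_add_eq_zero_right h
        have := congrArg (fun w => (t*(1-t))⁻¹ • w) h'
        simp only [smul_smul, inv_mul_cancel₀ h0, one_smul] at this
        rw [this, div_eq_inv_mul]
    have hucont : Continuous u := by
      apply Continuous.add
      · exact (continuous_const.sub (continuous_const.mul continuous_id)).smul continuous_const
      · exact (continuous_id.mul (continuous_const.sub continuous_id)).smul continuous_const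
    set c : ℝ → X := fun t => a + (r * ‖u t‖⁻¹) • u t with hc
    have hca : ∀ t, ‖c t - a‖ = r := by
      intro t
      have he : c t - a = (r * ‖u t‖⁻¹) • u t := add_sub_cancel_left a _
      rw [he, norm_smul, Real.norm_eq_abs, abs_of_nonneg (by positivity)]
      have h0 : ‖u t‖ ≠ 0 := norm_ne_zero_iff.mpr (hu0 t)
      field_simp
    have hccont : Continuous c := by
      rw [hc]
      exact continuous_const.add ((continuous_const.mul
        (hucont.norm.inv₀ (fun t => norm_ne_zero_iff.mpr (hu0 t)))).smul hucont)
    set g : ℝ → ℝ := fun t => ‖c t - b‖ with hg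
    have hgcont : Continuous g := by
      rw [hg]
      exact (hccont.sub continuous_const).norm
    have hg0 : g 0 = |r - dd| := by
      have hu00 : u 0 = e₁ := by
        show (1 - 2*(0:ℝ)) • e₁ + ((0:ℝ)*(1-0)) • e₂ = e₁
        norm_num
      have he : c 0 - b = (r * dd⁻¹ - 1) • e₁ := by
        show a + (r * ‖u 0‖⁻¹) • u 0 - b = _
        rw [hu00, ← hdd, he₁, sub_smul, one_smul]
        abel
      show ‖c 0 - b‖ = |r - dd|
      rw [he, norm_smul, Real.norm_eq_abs, ← hdd]
      rw [← abs_of_pos hd0, ← abs_mul]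
      rw [abs_of_pos hd0]
      congr 1
      field_simp
    have hg1 : g 1 = r + dd := by
      have hu1 : u 1 = -e₁ := by
        show (1 - 2*(1:ℝ)) • e₁ + ((1:ℝ)*(1-1)) • e₂ = -e₁
        norm_num
      have he : c 1 - b = (-(r * dd⁻¹ + 1)) • e₁ := by
        show a + (r * ‖u 1‖⁻¹) • u 1 - b = _
        rw [hu1, norm_neg, ← hdd, he₁]
        rw [neg_smul, add_smul, one_smul, smul_neg]
        abel
      show ‖c 1 - b‖ = r + dd
      rw [he, norm_smul, Real.norm_eq_abs, ← hdd, abs_neg]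
      rw [abs_of_nonneg (by positivity)]
      have h0 : dd ≠ 0 := ne_of_gt hd0
      field_simp
    have hmem : s ∈ Set.Icc (g 0) (g 1) := by
      rw [hg0, hg1]
      have hd' : ‖a - b‖ = dd := by rw [hdd, he₁, norm_sub_rev]
      rw [hd'] at h1 h2
      obtain ⟨hl, hu'⟩ := abs_le.mp h1
      constructor
      · exact abs_le.mpr ⟨by linarith, by linarith⟩
      · linarith
    obtain ⟨t, _, hts⟩ := intermediate_value_Icc (by norm_num : (0:ℝ) ≤ 1)
      hgcont.continuousOn hmem
    exact ⟨c t, hca t, hts⟩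


lemma core' (hX : 2 ≤ Module.rank ℝ X) (hY : Module.finrank ℝ Y = 2)
    (hsc : ∀ a b : Y, a ≠ 0 → b ≠ 0 → ‖a + b‖ = ‖a‖ + ‖b‖ → ∃ γ : ℝ, 0 < γ ∧ a = γ • b)
    (f : X → Y) (ρ' : ℝ) (hρ' : 0 < ρ')
    (hf' : ∀ a b : X, ‖a - b‖ = ρ' → ‖f a - f b‖ = ρ')
    (hne : ∀ u v : X, ‖u - v‖ = 2 * ρ' → ‖f u - f v‖ ≠ ρ') :
    ∀ n : ℕ, 1 ≤ n → ∀ a b : X, ‖a - b‖ = (n:ℝ) * ρ' / 2 →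
      ‖f a - f b‖ = (n:ℝ) * ρ' / 2 := by
  -- step (a): two-step rigidity
  have step2 : ∀ (x e : X), ‖e‖ = ρ' →
      f (x + (2:ℝ) • e) = (2:ℝ) • f (x + e) - f x := by
    intro x e he
    obtain ⟨w, hw1, hw2⟩ := exists_point'' hX (0:X) e (r := ρ') (s := ρ')
      (le_of_lt hρ') (le_of_lt hρ')
      (by rw [sub_self, abs_zero, zero_sub, norm_neg, he]; exact hρ'.le)
      (by rw [zero_sub, norm_neg, he]; linarith)
    rw [sub_zero] at hw1
    have dist : ∀ (p q : X), p - q = -e ∨ p - q = -w ∨ p - q = e - w →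
        ‖f p - f q‖ = ρ' := by
      intro p q hpq
      apply hf'
      rcases hpq with h | h | h
      · rw [h, norm_neg, he]
      · rw [h, norm_neg, hw1]
      · rw [h, norm_sub_rev, hw2]
    have h01 : ‖f x - f (x + e)‖ = ρ' := dist _ _ (Or.inl (by module))
    have h12 : ‖f (x + e) - f (x + (2:ℝ) • e)‖ = ρ' := dist _ _ (Or.inl (by module))
    have h0Q0 : ‖f x - f (x + w)‖ = ρ' := dist _ _ (Or.inr (Or.inl (by module)))
    have h1Q0 : ‖f (x + e) - f (x + w)‖ = ρ' := dist _ _ (Or.inr (Or.inr (by module)))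
    have h1Q1 : ‖f (x + e) - f (x + e + w)‖ = ρ' := dist _ _ (Or.inr (Or.inl (by module)))
    have hQ01 : ‖f (x + w) - f (x + e + w)‖ = ρ' := dist _ _ (Or.inl (by module))
    have h2Q1 : ‖f (x + (2:ℝ) • e) - f (x + e + w)‖ = ρ' :=
      dist _ _ (Or.inr (Or.inr (by module)))
    rcases local_step' hY hsc hρ' h01 h12 h0Q0 h1Q0 h1Q1 hQ01 h2Q1 with h | h
    · exact h
    · exfalso
      apply hne x (x + (2:ℝ) • e) _ h
      have he2 : x - (x + (2:ℝ) • e) = -((2:ℝ) • e) := by module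
      rw [he2, norm_neg, norm_smul, Real.norm_eq_abs,
        abs_of_pos (by norm_num : (0:ℝ) < 2), he]
  -- step (b): chains are affine
  have diff : ∀ (x e : X), ‖e‖ = ρ' → ∀ n : ℕ,
      f (x + ((n:ℝ) + 1) • e) - f (x + (n:ℝ) • e) = f (x + e) - f x := by
    intro x e he n
    induction n with
    | zero =>
      have e1 : x + (((0:ℕ):ℝ) + 1) • e = x + e := by push_cast; module
      have e2 : x + ((0:ℕ):ℝ) • e = x := by push_cast; module
      rw [e1, e2]
    | succ n ih =>
      have hcast : ((n + 1 : ℕ):ℝ) = (n:ℝ) + 1 := by push_cast; ring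
      rw [hcast]
      have B1 : f (x + ((n:ℝ) + 1 + 1) • e)
          = (2:ℝ) • f (x + ((n:ℝ) + 1) • e) - f (x + (n:ℝ) • e) := by
        have A1 : x + ((n:ℝ) + 1 + 1) • e = (x + (n:ℝ) • e) + (2:ℝ) • e := by module
        have A2 : x + ((n:ℝ) + 1) • e = (x + (n:ℝ) • e) + e := by module
        rw [A1, A2]
        exact step2 _ e he
      rw [B1, sub_eq_iff_eq_add.mp ih]
      module
  have chain : ∀ (x e : X), ‖e‖ = ρ' → ∀ n : ℕ,
      f (x + (n:ℝ) • e) = f x + (n:ℝ) • (f (x + e) - f x) := by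
    intro x e he n
    induction n with
    | zero => simp
    | succ n ih =>
      have hcast : ((n + 1 : ℕ):ℝ) = (n:ℝ) + 1 := by push_cast; ring
      rw [hcast]
      have hd := diff x e he n
      have h' : f (x + ((n:ℝ) + 1) • e) = (f (x + e) - f x) + f (x + (n:ℝ) • e) :=
        sub_eq_iff_eq_add.mp hd
      rw [h', ih]
      module
  -- step (c): integer multiples are preserved
  have integer : ∀ n : ℕ, 1 ≤ n → ∀ a b : X, ‖a - b‖ = (n:ℝ) * ρ' →
      ‖f a - f b‖ = (n:ℝ) * ρ' := by
    intro n hn a b hab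
    have hn0 : (n:ℝ) ≠ 0 := Nat.cast_ne_zero.mpr (by omega)
    have hnpos : (0:ℝ) < (n:ℝ) := by
      have : 0 < n := by omega
      exact_mod_cast this
    set e := (n:ℝ)⁻¹ • (b - a) with hee
    have he : ‖e‖ = ρ' := by
      rw [hee, norm_smul, Real.norm_eq_abs, abs_of_pos (inv_pos.mpr hnpos),
        norm_sub_rev, hab]
      field_simp
    have hb : b = a + (n:ℝ) • e := by
      rw [hee, smul_smul, mul_inv_cancel₀ hn0, one_smul]
      abel
    have hc := chain a e he n
    rw [← hb] at hc
    have hδ : ‖f (a + e) - f a‖ = ρ' := by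
      rw [norm_sub_rev]
      apply hf'
      have h' : a - (a + e) = -e := by module
      rw [h', norm_neg, he]
    rw [hc]
    have h2 : f a - (f a + (n:ℝ) • (f (a + e) - f a))
        = -((n:ℝ) • (f (a + e) - f a)) := by module
    rw [h2, norm_neg, norm_smul, Real.norm_eq_abs, abs_of_pos hnpos, hδ]
  -- step (d): doubling through a pivot
  have double : ∀ (a z : X) (k : ℕ), 1 ≤ k → ‖a - z‖ = (k:ℝ) * ρ' →
      f ((2:ℝ) • a - z) = (2:ℝ) • f a - f z := by
    intro a z k hk haz
    have hk0 : (k:ℝ) ≠ 0 := Nat.cast_ne_zero.mpr (by omega)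
    have hkpos : (0:ℝ) < (k:ℝ) := by
      have : 0 < k := by omega
      exact_mod_cast this
    set e := (k:ℝ)⁻¹ • (a - z) with hee
    have he : ‖e‖ = ρ' := by
      rw [hee, norm_smul, Real.norm_eq_abs, abs_of_pos (inv_pos.mpr hkpos), haz]
      field_simp
    have h1 : z + (k:ℝ) • e = a := by
      rw [hee, smul_smul, mul_inv_cancel₀ hk0, one_smul]
      abel
    have hco : ((2*k:ℕ):ℝ) * (k:ℝ)⁻¹ = 2 := by
      push_cast
      field_simp
    have h2 : z + ((2*k : ℕ):ℝ) • e = (2:ℝ) • a - z := by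
      rw [hee, smul_smul, hco]
      module
    have c1 := chain z e he k
    have c2 := chain z e he (2*k)
    rw [h1] at c1
    rw [h2] at c2
    rw [c2, c1]
    push_cast
    module
  -- step (e): halving
  intro n hn a b hab
  have hnpos : (0:ℝ) < (n:ℝ) := by
    have : 0 < n := by omega
    exact_mod_cast this
  have hnr : 0 < (n:ℝ) * ρ' := by positivity
  obtain ⟨z, hza, hzb⟩ := exists_point'' hX a b (r := (n:ℝ)*ρ') (s := (n:ℝ)*ρ')
    (le_of_lt hnr) (le_of_lt hnr)
    (by rw [sub_self, abs_zero]; exact norm_nonneg _)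
    (by rw [hab]; linarith)
  have hda := double a z n hn (by rw [norm_sub_rev]; exact hza)
  have hdb := double b z n hn (by rw [norm_sub_rev]; exact hzb)
  have hxy : ‖((2:ℝ) • a - z) - ((2:ℝ) • b - z)‖ = (n:ℝ) * ρ' := by
    have heq : ((2:ℝ) • a - z) - ((2:ℝ) • b - z) = (2:ℝ) • (a - b) := by module
    rw [heq, norm_smul, Real.norm_eq_abs, abs_of_pos (by norm_num : (0:ℝ) < 2), hab]
    ring
  have hint := integer n hn _ _ hxy
  rw [hda, hdb] at hint
  have heq2 : ((2:ℝ) • f a - f z) - ((2:ℝ) • f b - f z) = (2:ℝ) • (f a - f b) := by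
    module
  rw [heq2, norm_smul, Real.norm_eq_abs, abs_of_pos (by norm_num : (0:ℝ) < 2)] at hint
  linarith


end Xside
end BQAux

/-- Remark 2: suppose `f : X → Y` preserves the distance `ρ` and for all `u, v ∈ X`, if
`‖u - v‖ / ρ` is a positive rational then `‖f u - f v‖ ≠ ‖u - v‖ / 2`.  Then `f` is an
isometry. -/
theorem beckman_quarles_remark2 {X Y : Type*}
    [NormedAddCommGroup X] [NormedSpace ℝ X] [NormedAddCommGroup Y] [NormedSpace ℝ Y]
    (hX : 2 ≤ Module.rank ℝ X) (hY : Module.finrank ℝ Y = 2)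
    (hsc : ∀ a b : Y, a ≠ 0 → b ≠ 0 → ‖a + b‖ = ‖a‖ + ‖b‖ → ∃ γ : ℝ, 0 < γ ∧ a = γ • b)
    (ρ : ℝ) (hρ : 0 < ρ) (f : X → Y)
    (hf : ∀ a b : X, ‖a - b‖ = ρ → ‖f a - f b‖ = ρ)
    (hhalf : ∀ u v : X, (∃ q : ℚ, 0 < q ∧ ‖u - v‖ / ρ = (q : ℝ)) →
      ‖f u - f v‖ ≠ ‖u - v‖ / 2) :
    ∀ a b : X, ‖f a - f b‖ = ‖a - b‖ := by
  -- the "no-fold" hypothesis at every dyadic scale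
  have hnej : ∀ j : ℕ, ∀ u v : X, ‖u - v‖ = 2 * (ρ / 2 ^ j) →
      ‖f u - f v‖ ≠ ρ / 2 ^ j := by
    intro j u v huv
    have hq : ∃ q : ℚ, 0 < q ∧ ‖u - v‖ / ρ = (q : ℝ) := by
      refine ⟨2 / 2 ^ j, by positivity, ?_⟩
      rw [huv]
      push_cast
      field_simp
    have h := hhalf u v hq
    rw [huv] at h
    intro hcon
    apply h
    rw [hcon]
    ring
  -- distance ρ/2^j is preserved
  have S : ∀ j : ℕ, ∀ a b : X, ‖a - b‖ = ρ / 2 ^ j → ‖f a - f b‖ = ρ / 2 ^ j := by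
    intro j
    induction j with
    | zero =>
      intro a b hab
      rw [pow_zero, div_one] at hab ⊢
      exact hf a b hab
    | succ j ih =>
      intro a b hab
      have hρj : 0 < ρ / 2 ^ j := by positivity
      have hc := core' hX hY hsc f (ρ / 2 ^ j) hρj ih (hnej j) 1 (le_refl 1) a b
      have hconv : (1:ℝ) * (ρ / 2 ^ j) / 2 = ρ / 2 ^ (j + 1) := by
        rw [pow_succ]; ring
      rw [Nat.cast_one, hconv] at hc
      exact hc hab
  -- all multiples of ρ/2^(j+1) are preserved
  have PRES : ∀ j n : ℕ, 1 ≤ n → ∀ a b : X, ‖a - b‖ = (n:ℝ) * (ρ / 2 ^ (j + 1)) →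
      ‖f a - f b‖ = (n:ℝ) * (ρ / 2 ^ (j + 1)) := by
    intro j n hn a b hab
    have hρj : 0 < ρ / 2 ^ j := by positivity
    have hc := core' hX hY hsc f (ρ / 2 ^ j) hρj (S j) (hnej j) n hn a b
    have hconv : (n:ℝ) * (ρ / 2 ^ j) / 2 = (n:ℝ) * (ρ / 2 ^ (j + 1)) := by
      rw [pow_succ]; ring
    rw [hconv] at hc
    exact hc hab
  -- small dyadic scales below any ε
  have small : ∀ ε : ℝ, 0 < ε → ∃ j : ℕ, ρ / 2 ^ (j + 1) < ε := by
    intro ε hε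
    obtain ⟨j, hj⟩ := pow_unbounded_of_one_lt (ρ / ε) (by norm_num : (1:ℝ) < 2)
    refine ⟨j, ?_⟩
    rw [div_lt_iff₀ (by positivity)]
    rw [div_lt_iff₀ hε] at hj
    have h2 : (2:ℝ) ^ j ≤ 2 ^ (j + 1) := by
      apply pow_le_pow_right₀ (by norm_num)
      omega
    nlinarith [pow_pos (by norm_num : (0:ℝ) < 2) j]
  intro a b
  rcases eq_or_ne a b with rfl | hab
  · simp
  have hd : 0 < ‖a - b‖ := norm_pos_iff.mpr (sub_ne_zero.mpr hab)
  set d := ‖a - b‖ with hdd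
  -- upper bound
  have upper : ∀ ε : ℝ, 0 < ε → ‖f a - f b‖ ≤ d + ε := by
    intro ε hε
    obtain ⟨j, hj⟩ := small ε hε
    set ρ'' := ρ / 2 ^ (j + 1) with hρ''
    have hρ''0 : 0 < ρ'' := by rw [hρ'']; positivity
    set n := ⌈d / ρ''⌉₊ with hn
    have hn1 : 1 ≤ n := Nat.one_le_ceil_iff.mpr (by positivity)
    have hdn : d ≤ (n:ℝ) * ρ'' := by
      have h := Nat.le_ceil (d / ρ'')
      rw [div_le_iff₀ hρ''0] at h
      exact h
    have hnd : (n:ℝ) * ρ'' ≤ d + ε := by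
      have h := Nat.ceil_lt_add_one (a := d / ρ'') (by positivity)
      rw [← hn] at h
      have h2 : (n:ℝ) * ρ'' < (d / ρ'' + 1) * ρ'' := by
        exact mul_lt_mul_of_pos_right h hρ''0
      rw [add_mul, div_mul_cancel₀ _ (ne_of_gt hρ''0), one_mul] at h2
      linarith
    obtain ⟨c, hca, hcb⟩ := exists_point'' hX a b
      (r := (n:ℝ) * ρ'' / 2) (s := (n:ℝ) * ρ'' / 2) (by positivity) (by positivity)
      (by rw [sub_self, abs_zero]; exact norm_nonneg _)
      (by rw [← hdd]; linarith)
    have hhv : (n:ℝ) * ρ'' / 2 = (n:ℝ) * (ρ / 2 ^ (j + 1 + 1)) := by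
      rw [hρ'', pow_succ]; ring
    have hfa : ‖f c - f a‖ = (n:ℝ) * ρ'' / 2 := by
      rw [hhv] at hca ⊢
      exact PRES (j+1) n hn1 c a hca
    have hfb : ‖f c - f b‖ = (n:ℝ) * ρ'' / 2 := by
      rw [hhv] at hcb ⊢
      exact PRES (j+1) n hn1 c b hcb
    calc ‖f a - f b‖ ≤ ‖f a - f c‖ + ‖f c - f b‖ := norm_sub_le_norm_sub_add_norm_sub _ _ _
      _ = (n:ℝ) * ρ'' / 2 + (n:ℝ) * ρ'' / 2 := by rw [norm_sub_rev, hfa, hfb]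
      _ ≤ d + ε := by linarith
  -- lower bound
  have lower : ∀ ε : ℝ, 0 < ε → ε < d / 2 → d - ε ≤ ‖f a - f b‖ := by
    intro ε hε hεd
    obtain ⟨j, hj⟩ := small ε hε
    set ρ'' := ρ / 2 ^ (j + 1) with hρ''
    have hρ''0 : 0 < ρ'' := by rw [hρ'']; positivity
    set n := ⌊d / ρ''⌋₊ with hn
    have hn1 : 1 ≤ n := by
      apply Nat.le_floor
      rw [Nat.cast_one, le_div_iff₀ hρ''0, one_mul]
      linarith
    have htd : (n:ℝ) * ρ'' ≤ d := by
      have h := Nat.floor_le (a := d / ρ'') (by positivity)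
      rw [← hn] at h
      have := mul_le_mul_of_nonneg_right h (le_of_lt hρ''0)
      rwa [div_mul_cancel₀ _ (ne_of_gt hρ''0)] at this
    have htε : d - ε < (n:ℝ) * ρ'' := by
      have h := Nat.lt_floor_add_one (d / ρ'')
      rw [← hn] at h
      have h2 : d < ((n:ℝ) + 1) * ρ'' := by
        have := mul_lt_mul_of_pos_right h hρ''0
        rwa [div_mul_cancel₀ _ (ne_of_gt hρ''0)] at this
      rw [add_mul, one_mul] at h2
      linarith
    have h2n : 1 ≤ 2 * n := by omega
    obtain ⟨c, hca, hcb⟩ := exists_point'' hX a b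
      (r := ((2*n:ℕ):ℝ) * ρ'') (s := (n:ℝ) * ρ'')
      (by positivity) (by positivity)
      (by
        push_cast
        rw [← hdd]
        have he : |2 * (n:ℝ) * ρ'' - (n:ℝ) * ρ''| = (n:ℝ) * ρ'' := by
          rw [abs_of_nonneg (by nlinarith [Nat.cast_nonneg (α := ℝ) n])]
          ring
        rw [he]
        exact htd)
      (by
        push_cast
        rw [← hdd]
        nlinarith [Nat.cast_nonneg (α := ℝ) n, hρ''0, htε, hεd])
    have hfa : ‖f c - f a‖ = ((2*n:ℕ):ℝ) * ρ'' := by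
      exact PRES j (2*n) h2n c a hca
    have hfb : ‖f c - f b‖ = (n:ℝ) * ρ'' := PRES j n hn1 c b hcb
    have htri : ‖f c - f a‖ ≤ ‖f c - f b‖ + ‖f b - f a‖ :=
      norm_sub_le_norm_sub_add_norm_sub _ _ _
    rw [hfa, hfb] at htri
    push_cast at htri
    rw [norm_sub_rev] at htri
    linarith
  have hle : ‖f a - f b‖ ≤ d := le_of_forall_pos_le_add upper
  have hge : d ≤ ‖f a - f b‖ := by
    by_contra hcon
    push_neg at hcon
    set ε := min ((d - ‖f a - f b‖) / 2) (d / 4) with hε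
    have hε0 : 0 < ε := lt_min (by linarith) (by linarith)
    have hεd : ε < d / 2 := lt_of_le_of_lt (min_le_right _ _) (by linarith)
    have hl := lower ε hε0 hεd
    have h1 : d - ‖f a - f b‖ ≤ ε := by linarith
    have h2 : ε ≤ (d - ‖f a - f b‖) / 2 := min_le_left _ _
    linarith
  linarith
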